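/- Let 1 < p < 2, r > 0 and t ∈ [−π, π]. Then G(r,t) := −(1+r²)^(p/2) + ((1 + r² + 2r cos t)/(1 + cos(π/p)))^(p/2) − 2^(p/2) r^(p/2) cos(pt/2) tan(π/(2p)) ≥ 0. -/

import Mathlib

/-!
Put `q = p / 2`, `β = π / (2p)`, `a = 1 + cos (π / p) = 2 cos² β` and
`k = 2r / (1 + r²) ∈ (0, 1]`. Dividing by `(1 + r²) ^ q`, the claim becomes
`a ^ q (1 + tan β cos (pt/2) k ^ q) ≤ (1 + k cos t) ^ q`. The right side is concave in `k`, hence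
above its chord between `k = 0` and `k = 1`, while the left side is below a line in `k` (use
`k ^ q ≤ 1 - q + q k` if `cos (pt/2) ≥ 0` and `k ≤ k ^ q` otherwise). So it suffices to compare
the two lines at the endpoints.

At `k = 1` the claim reads `cos β ^ p (1 + tan β cos (pφ)) ≤ cos φ ^ p` with `φ = t / 2`: the
function `cos φ ^ p - sin β cos β ^ (p - 1) cos (pφ)` is least at `φ = β`, because its derivative
has the sign of `u β - u φ` for the ratio `u φ = sin φ cos φ ^ (p - 1) / sin (pφ)`, which
decreases by concavity of `sin`. At `k = 0` the claim is `a ^ q (1 + (1 - q) tan β) ≤ 1`; in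
terms of `s = β - π/4` and after weighted AM-GM this is a trigonometric polynomial inequality in
`s`, which follows from Taylor bounds for `sin` and `cos` and from `3.14 < π < 3.15`.
-/

open Real Set

lemma mul_sin_le_mul_sin {x y : ℝ} (hy : 0 ≤ y) (hyx : y ≤ x) (hx : x ≤ π) :
    y * sin x ≤ x * sin y := by
  obtain rfl | hx0 := (hy.trans hyx).eq_or_lt
  · simp [le_antisymm hyx hy]
  have hyx' : y / x ≤ 1 := (div_le_one hx0).2 hyx
  have := strictConcaveOn_sin_Icc.concaveOn.2 ⟨hx0.le, hx⟩ ⟨le_rfl, pi_pos.le⟩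
    (div_nonneg hy hx0.le) (sub_nonneg.2 hyx') (add_sub_cancel (y / x) 1)
  simp only [smul_eq_mul, mul_zero, add_zero, sin_zero, div_mul_cancel₀ _ hx0.ne'] at this
  rwa [div_mul_eq_mul_div, div_le_iff₀ hx0, mul_comm (sin y)] at this

lemma sin_mul_pos {p φ : ℝ} (hp0 : 0 < p) (hp2 : p ≤ 2) (hφ : φ ∈ Ioo 0 (π / 2)) :
    0 < sin (p * φ) :=
  sin_pos_of_pos_of_lt_pi (mul_pos hp0 hφ.1) (by nlinarith [hφ.1, hφ.2])

lemma antitoneOn_sin_mul_cos_rpow_div_sin {p : ℝ} (hp1 : 1 ≤ p) (hp2 : p ≤ 2) :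
    AntitoneOn (fun φ ↦ sin φ * cos φ ^ (p - 1) / sin (p * φ)) (Ioo 0 (π / 2)) := by
  have hderiv : ∀ φ ∈ Ioo 0 (π / 2),
      HasDerivAt (fun φ ↦ sin φ * cos φ ^ (p - 1) / sin (p * φ))
        (cos φ ^ (p - 2) * ((2 - p) / 2 * sin (p * φ) - p / 2 * sin ((2 - p) * φ))
          / sin (p * φ) ^ 2) φ := by
    intro φ hφ
    have hcos : 0 < cos φ := cos_pos_of_mem_Ioo ⟨by linarith [hφ.1, pi_pos], hφ.2⟩
    have hcos_rpow : cos φ ^ (p - 1) = cos φ ^ (p - 2) * cos φ := by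
      rw [← rpow_add_one hcos.ne']; ring_nf
    have hpφ : HasDerivAt (fun φ ↦ sin (p * φ)) (cos (p * φ) * p) φ := by
      simpa using ((hasDerivAt_id φ).const_mul p).sin
    refine (((hasDerivAt_sin φ).mul ((hasDerivAt_cos φ).rpow_const (Or.inl hcos.ne'))).div
      hpφ (sin_mul_pos (by linarith) hp2 hφ).ne').congr_deriv ?_
    simp only [Pi.mul_apply]
    congr 1
    rw [show p - 1 - 1 = p - 2 by ring, hcos_rpow, show (2 - p) * φ = 2 * φ - p * φ by ring,
      sin_sub, sin_two_mul, cos_two_mul]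
    linear_combination (cos φ ^ (p - 2) * sin (p * φ) * (1 - p)) * sin_sq_add_cos_sq φ
  refine antitoneOn_of_hasDerivWithinAt_nonpos (convex_Ioo 0 (π / 2))
    (fun φ hφ ↦ (hderiv φ hφ).continuousAt.continuousWithinAt)
    (fun φ hφ ↦ (hderiv φ (interior_subset hφ)).hasDerivWithinAt) fun φ hφ ↦ ?_
  rw [interior_Ioo] at hφ
  have hsin := mul_sin_le_mul_sin (x := p * φ) (y := (2 - p) * φ) (by nlinarith [hφ.1])
    (by nlinarith [hφ.1]) (by nlinarith [hφ.2, mul_le_mul_of_nonneg_right hp2 hφ.1.le])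
  have hcos : 0 ≤ cos φ := cos_nonneg_of_mem_Icc ⟨by linarith [hφ.1, pi_pos], hφ.2.le⟩
  refine div_nonpos_of_nonpos_of_nonneg
    (mul_nonpos_of_nonneg_of_nonpos (rpow_nonneg hcos _) ?_) (sq_nonneg _)
  nlinarith [hφ.1]

lemma hasDerivAt_cos_rpow_sub_mul_cos_mul {p : ℝ} (hp : 1 ≤ p) (K φ : ℝ) :
    HasDerivAt (fun φ ↦ cos φ ^ p - K * cos (p * φ))
      (p * (K * sin (p * φ) - sin φ * cos φ ^ (p - 1))) φ := by
  have hcos : HasDerivAt (fun φ ↦ cos (p * φ)) (-sin (p * φ) * p) φ := by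
    simpa using ((hasDerivAt_id φ).const_mul p).cos
  exact (((hasDerivAt_cos φ).rpow_const (Or.inr hp)).sub (hcos.const_mul K)).congr_deriv (by ring)

lemma pi_div_two_mul_mem_Ioo {p : ℝ} (hp : 1 < p) : π / (2 * p) ∈ Ioo 0 (π / 2) :=
  ⟨by positivity, div_lt_div_of_pos_left pi_pos two_pos (by linarith)⟩

lemma cos_pi_div_two_mul_pos {p : ℝ} (hp : 1 < p) : 0 < cos (π / (2 * p)) :=
  cos_pos_of_mem_Ioo ⟨by linarith [(pi_div_two_mul_mem_Ioo hp).1, pi_pos],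
    (pi_div_two_mul_mem_Ioo hp).2⟩

lemma cos_rpow_add_le_cos_rpow_of_nonneg {p φ : ℝ} (hp1 : 1 < p) (hp2 : p ≤ 2)
    (hφ : φ ∈ Icc 0 (π / 2)) :
    cos (π / (2 * p)) ^ p + sin (π / (2 * p)) * cos (π / (2 * p)) ^ (p - 1) * cos (p * φ)
      ≤ cos φ ^ p := by
  set β := π / (2 * p)
  set K := sin β * cos β ^ (p - 1)
  set u := fun φ ↦ sin φ * cos φ ^ (p - 1) / sin (p * φ)
  set g := fun φ ↦ cos φ ^ p - K * cos (p * φ)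
  have hpβ : p * β = π / 2 := by simp only [β]; field_simp
  have hβ : β ∈ Ioo 0 (π / 2) := pi_div_two_mul_mem_Ioo hp1
  have hg := hasDerivAt_cos_rpow_sub_mul_cos_mul hp1.le K
  have hsin : ∀ φ ∈ Ioo 0 (π / 2), 0 < p * sin (p * φ) := fun φ hφ ↦
    mul_pos (by linarith) (sin_mul_pos (by linarith) hp2 hφ)
  have hg' : ∀ φ ∈ Ioo 0 (π / 2),
      p * (K * sin (p * φ) - sin φ * cos φ ^ (p - 1)) = p * sin (p * φ) * (u β - u φ) := by
    intro φ hφ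
    have := (sin_mul_pos (by linarith) hp2 hφ).ne'
    simp only [u, hpβ, sin_pi_div_two, div_one, K]
    field_simp
  have hu := antitoneOn_sin_mul_cos_rpow_div_sin hp1.le hp2
  have hanti : AntitoneOn g (Icc 0 β) := by
    refine antitoneOn_of_hasDerivWithinAt_nonpos (convex_Icc 0 β)
      (fun φ _ ↦ (hg φ).continuousAt.continuousWithinAt) (fun φ _ ↦ (hg φ).hasDerivWithinAt)
      fun φ hφ ↦ ?_
    rw [interior_Icc] at hφ
    have hφ' : φ ∈ Ioo 0 (π / 2) := ⟨hφ.1, hφ.2.trans hβ.2⟩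
    rw [hg' φ hφ']
    exact mul_nonpos_of_nonneg_of_nonpos (hsin φ hφ').le (sub_nonpos.2 (hu hφ' hβ hφ.2.le))
  have hmono : MonotoneOn g (Icc β (π / 2)) := by
    refine monotoneOn_of_hasDerivWithinAt_nonneg (convex_Icc β (π / 2))
      (fun φ _ ↦ (hg φ).continuousAt.continuousWithinAt) (fun φ _ ↦ (hg φ).hasDerivWithinAt)
      fun φ hφ ↦ ?_
    rw [interior_Icc] at hφ
    have hφ' : φ ∈ Ioo 0 (π / 2) := ⟨hβ.1.trans hφ.1, hφ.2⟩
    rw [hg' φ hφ']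
    exact mul_nonneg (hsin φ hφ').le (sub_nonneg.2 (hu hβ hφ' hφ.1.le))
  have hgβ : g β = cos β ^ p := by simp only [g, hpβ, cos_pi_div_two, mul_zero, sub_zero]
  suffices g β ≤ g φ by simpa only [g, hgβ, le_sub_iff_add_le] using this
  rcases le_total φ β with h | h
  · exact hanti ⟨hφ.1, h⟩ ⟨hβ.1.le, le_rfl⟩ h
  · exact hmono ⟨le_rfl, hβ.2.le⟩ ⟨h, hφ.2⟩ h

lemma cos_rpow_add_le_cos_rpow {p φ : ℝ} (hp1 : 1 < p) (hp2 : p ≤ 2)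
    (hφ : φ ∈ Icc (-(π / 2)) (π / 2)) :
    cos (π / (2 * p)) ^ p + sin (π / (2 * p)) * cos (π / (2 * p)) ^ (p - 1) * cos (p * φ)
      ≤ cos φ ^ p := by
  have h := cos_rpow_add_le_cos_rpow_of_nonneg hp1 hp2 (φ := |φ|)
    ⟨abs_nonneg φ, abs_le.2 hφ⟩
  have hpφ : cos (p * |φ|) = cos (p * φ) := by
    rw [← cos_abs (p * φ), abs_mul, abs_of_pos (by linarith : 0 < p)]
  rwa [cos_abs, hpφ] at h

lemma one_add_cos_eq (x : ℝ) : 1 + cos x = 2 * cos (x / 2) ^ 2 := by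
  rw [cos_sq (x / 2), mul_div_cancel₀ x two_ne_zero]; ring

lemma sq_rpow_half {x : ℝ} (hx : 0 ≤ x) (p : ℝ) : (x ^ 2) ^ (p / 2) = x ^ p := by
  rw [← rpow_natCast, ← rpow_mul hx]; ring_nf

lemma one_add_cos_rpow {x : ℝ} (hx : 0 ≤ cos (x / 2)) (p : ℝ) :
    (1 + cos x) ^ (p / 2) = 2 ^ (p / 2) * cos (x / 2) ^ p := by
  rw [one_add_cos_eq, mul_rpow zero_le_two (sq_nonneg _), sq_rpow_half hx]

lemma one_add_cos_pi_div_rpow_mul_le {p t : ℝ} (hp1 : 1 < p) (hp2 : p ≤ 2)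
    (ht : t ∈ Icc (-π) π) :
    (1 + cos (π / p)) ^ (p / 2) * (1 + tan (π / (2 * p)) * cos (p * t / 2))
      ≤ (1 + cos t) ^ (p / 2) := by
  have hβ : π / p / 2 = π / (2 * p) := by ring
  have hcosβ := cos_pi_div_two_mul_pos hp1
  have ht' : t / 2 ∈ Icc (-(π / 2)) (π / 2) := ⟨by linarith [ht.1], by linarith [ht.2]⟩
  have hcost : 0 ≤ cos (t / 2) := cos_nonneg_of_mem_Icc ht'
  rw [one_add_cos_rpow (hβ ▸ hcosβ.le), one_add_cos_rpow hcost, hβ, mul_assoc]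
  refine mul_le_mul_of_nonneg_left ?_ (by positivity)
  have h := cos_rpow_add_le_cos_rpow hp1 hp2 ht'
  have hsplit : cos (π / (2 * p)) ^ p = cos (π / (2 * p)) ^ (p - 1) * cos (π / (2 * p)) := by
    rw [← rpow_add_one hcosβ.ne']; ring_nf
  refine (le_of_eq ?_).trans h
  rw [hsplit, tan_eq_sin_div_cos]
  field_simp

lemma taylor_poly_le_sq {s y : ℝ} (hs : 0 < s) (hsy : 4 * s < y) (hy1 : 3.14 < y)
    (hy2 : y < 3.15) :
    ((y - 4 * s) * ((1 - s ^ 2 / 2 + s ^ 4 * (5 / 96)) - (s - s ^ 3 / 6)) + 8 * s)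
      * ((y + 8 * s) * (1 - s ^ 2 / 2 + s ^ 4 * (5 / 96)) - y * (s - s ^ 3 / 6))
      ≤ (y + 4 * s) ^ 2 := by
  have hs' : s < 0.79 := by linarith
  have hs1 := mul_pos hs (sub_pos.2 hs')
  have hy0 : 0 < y := by linarith
  -- the difference of the two sides is `s` times this polynomial
  have hR : 0 < -4 * y + 2 * y ^ 2 - 16 * s + 8 * s * y - 32 * s ^ 2 + 12 * s ^ 2 * y
      - 4 / 3 * s ^ 2 * y ^ 2 - 4 / 3 * s ^ 3 * y - 1 / 48 * s ^ 3 * y ^ 2 + 64 / 3 * s ^ 4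
      - 19 / 6 * s ^ 4 * y + 13 / 48 * s ^ 4 * y ^ 2 + 8 * s ^ 5 + 7 / 288 * s ^ 5 * y ^ 2
      - 13 / 3 * s ^ 6 + 23 / 72 * s ^ 6 * y - 5 / 288 * s ^ 6 * y ^ 2 - 5 / 3 * s ^ 7
      - 25 / 9216 * s ^ 7 * y ^ 2 + 5 / 18 * s ^ 8 - 25 / 2304 * s ^ 8 * y + 25 / 288 * s ^ 9 := by
    nlinarith [mul_pos hs hs, pow_pos hs 3, pow_pos hs 4, pow_pos hs 5, pow_pos hs 6,
      mul_pos (sub_pos.2 hy1) (sub_pos.2 hy2), mul_pos hs1 hy0, mul_pos (mul_pos hs1 hy0) hy0,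
      mul_pos (mul_pos hs1 hs) hs]
  nlinarith [mul_pos hs hR]

lemma sin_lt_cos_of_lt_pi_div_four {x : ℝ} (hx0 : 0 ≤ x) (hx : x < π / 4) : sin x < cos x := by
  rw [← cos_pi_div_two_sub]
  exact cos_lt_cos_of_nonneg_of_le_pi hx0 (by linarith [pi_pos]) (by linarith)

lemma cos_sin_poly_le_sq {s : ℝ} (hs0 : 0 < s) (hs : s < π / 4) :
    ((π - 4 * s) * (cos s - sin s) + 8 * s) * ((π + 8 * s) * cos s - π * sin s)
      ≤ (π + 4 * s) ^ 2 := by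
  have hs1 : |s| ≤ 1 := by rw [abs_of_pos hs0]; linarith [pi_lt_four]
  have hcos : cos s ≤ 1 - s ^ 2 / 2 + s ^ 4 * (5 / 96) := by
    have := (abs_le.1 (cos_bound hs1)).2
    rw [abs_of_pos hs0] at this
    linarith
  have hsin := sin_ge_sub_cube hs0.le
  have hsc := (sin_lt_cos_of_lt_pi_div_four hs0.le hs).le
  have hcos0 : 0 ≤ cos s := cos_nonneg_of_mem_Icc ⟨by linarith [pi_pos], by linarith⟩
  refine le_trans ?_ (taylor_poly_le_sq hs0 (by linarith) pi_gt_d2 pi_lt_d2)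
  exact mul_le_mul (by nlinarith) (by nlinarith) (by nlinarith) (by nlinarith)

lemma one_add_cos_pi_div_rpow_mul_le_one {p : ℝ} (hp1 : 1 < p) (hp2 : p < 2) :
    (1 + cos (π / p)) ^ (p / 2) * (1 + (1 - p / 2) * tan (π / (2 * p))) ≤ 1 := by
  set s := π / (2 * p) - π / 4 with hs
  have hs0 : 0 < s := by
    rw [hs, sub_pos]; exact div_lt_div_of_pos_left pi_pos (by positivity) (by linarith)
  have hsπ : s < π / 4 := by linarith [(pi_div_two_mul_mem_Ioo hp1).2]
  have hp : p = 2 * π / (π + 4 * s) := by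
    rw [hs]; field_simp; ring
  have hx0 : 0 < cos s - sin s := sub_pos.2 (sin_lt_cos_of_lt_pi_div_four hs0.le hsπ)
  have h1 : 1 + cos (π / p) = (cos s - sin s) ^ 2 := by
    rw [show π / p = 2 * s + π / 2 by rw [hs]; field_simp; ring, cos_add_pi_div_two, sin_two_mul]
    linear_combination -sin_sq_add_cos_sq s
  have h2 : tan (π / (2 * p)) = (cos s + sin s) / (cos s - sin s) := by
    rw [show π / (2 * p) = s + π / 4 by rw [hs]; ring, tan_eq_sin_div_cos, sin_add, cos_add,
      sin_pi_div_four, cos_pi_div_four]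
    have := hx0.ne'
    field_simp
    ring
  set Y := (2 - p / 2) * cos s - p / 2 * sin s
  have h3 : (1 + cos (π / p)) ^ (p / 2) * (1 + (1 - p / 2) * tan (π / (2 * p)))
      = (cos s - sin s) ^ (p - 1) * Y := by
    rw [h1, h2, sq_rpow_half hx0.le, rpow_sub_one hx0.ne']
    field_simp
    ring
  rw [h3]
  rcases le_or_gt Y 0 with hY | hY
  · exact (mul_nonpos_of_nonneg_of_nonpos (rpow_nonneg hx0.le _) hY).trans zero_le_one
  have hamgm : (cos s - sin s) ^ (p - 1) ≤ 1 + (p - 1) * (cos s - sin s - 1) := by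
    simpa using rpow_one_add_le_one_add_mul_self (s := cos s - sin s - 1) (by linarith)
      (by linarith) (by linarith)
  calc (cos s - sin s) ^ (p - 1) * Y ≤ (1 + (p - 1) * (cos s - sin s - 1)) * Y :=
        mul_le_mul_of_nonneg_right hamgm hY.le
    _ = ((π - 4 * s) * (cos s - sin s) + 8 * s) * ((π + 8 * s) * cos s - π * sin s)
          / (π + 4 * s) ^ 2 := by
      simp only [Y]; rw [hp]; field_simp; ring
    _ ≤ 1 := (div_le_one (by positivity)).2 (cos_sin_poly_le_sq hs0 hsπ)

-- The left side lies below a line in `k` whose values at `k = 0` and `k = 1` are bounded by `h₀`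
-- and `h₁`; the right side lies above its chord by concavity.
lemma mul_one_add_mul_rpow_le {q k c L m M : ℝ} (hq0 : 0 ≤ q) (hq1 : q ≤ 1) (hk0 : 0 ≤ k)
    (hk1 : k ≤ 1) (hc : -1 ≤ c) (hL : 0 ≤ L) (hmM : m ≤ M) (hM : 0 ≤ M)
    (h₀ : L * (1 + (1 - q) * M) ≤ 1) (h₁ : L * (1 + m) ≤ (1 + c) ^ q) :
    L * (1 + m * k ^ q) ≤ (1 + k * c) ^ q := by
  have hchord : (1 - k) * 1 + k * (1 + c) ^ q ≤ (1 + k * c) ^ q := by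
    have := (concaveOn_rpow hq0 hq1).2 (mem_Ici.2 zero_le_one)
      (mem_Ici.2 (by linarith : 0 ≤ 1 + c)) (sub_nonneg.2 hk1) hk0 (sub_add_cancel 1 k)
    simp only [smul_eq_mul, one_rpow] at this
    exact this.trans_eq (by ring_nf)
  have hL1 : L ≤ 1 := le_trans (le_mul_of_one_le_right hL (by nlinarith)) h₀
  refine le_trans ?_ hchord
  rcases le_total 0 m with hm | hm
  · have htangent : k ^ q ≤ 1 + q * (k - 1) := by
      simpa using rpow_one_add_le_one_add_mul_self (s := k - 1) (by linarith) hq0 hq1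
    have h₀' : L * (1 + (1 - q) * m) ≤ 1 :=
      le_trans (mul_le_mul_of_nonneg_left (by nlinarith) hL) h₀
    calc L * (1 + m * k ^ q) ≤ L * (1 + m * (1 + q * (k - 1))) := by gcongr
      _ = (1 - k) * (L * (1 + (1 - q) * m)) + k * (L * (1 + m)) := by ring
      _ ≤ (1 - k) * 1 + k * (1 + c) ^ q := by gcongr
  · have hk : k ≤ k ^ q := by
      simpa using rpow_le_rpow_of_exponent_ge' hk0 hk1 hq0 hq1
    calc L * (1 + m * k ^ q) ≤ L * (1 + m * k) :=
          mul_le_mul_of_nonneg_left (by linarith [mul_le_mul_of_nonpos_left hk hm]) hL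
      _ = (1 - k) * L + k * (L * (1 + m)) := by ring
      _ ≤ (1 - k) * 1 + k * (1 + c) ^ q := by gcongr

theorem stmt_13 (p r t : ℝ) (hp1 : 1 < p) (hp2 : p < 2) (hr : 0 < r)
    (ht : t ∈ Set.Icc (-π) π) :
    -(1 + r ^ 2) ^ (p / 2)
      + ((1 + r ^ 2 + 2 * r * Real.cos t) / (1 + Real.cos (π / p))) ^ (p / 2)
      - (2 : ℝ) ^ (p / 2) * r ^ (p / 2) * Real.cos (p * t / 2) * Real.tan (π / (2 * p)) ≥ 0 := by
  set k := 2 * r / (1 + r ^ 2)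
  have hA : 0 < 1 + r ^ 2 := by positivity
  have hk0 : 0 ≤ k := by positivity
  have hk1 : k ≤ 1 := (div_le_one hA).2 (by nlinarith [sq_nonneg (1 - r)])
  have ha : 0 < 1 + cos (π / p) := by
    rw [one_add_cos_eq, show π / p / 2 = π / (2 * p) by ring]
    exact mul_pos two_pos (pow_pos (cos_pi_div_two_mul_pos hp1) 2)
  have hT : 0 ≤ tan (π / (2 * p)) :=
    tan_nonneg_of_nonneg_of_le_pi_div_two (pi_div_two_mul_mem_Ioo hp1).1.le
      (pi_div_two_mul_mem_Ioo hp1).2.le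
  have key := mul_one_add_mul_rpow_le (k := k) (by positivity) (by linarith) hk0 hk1
    (neg_one_le_cos t) (by positivity) (mul_le_of_le_one_right hT (cos_le_one _)) hT
    (one_add_cos_pi_div_rpow_mul_le_one hp1 hp2) (one_add_cos_pi_div_rpow_mul_le hp1 hp2.le ht)
  have h₁ : 1 + r ^ 2 + 2 * r * cos t = (1 + r ^ 2) * (1 + k * cos t) := by
    simp only [k]; field_simp
  have h₂ : (2 : ℝ) ^ (p / 2) * r ^ (p / 2) = (1 + r ^ 2) ^ (p / 2) * k ^ (p / 2) := by
    rw [← mul_rpow zero_le_two hr.le, ← mul_rpow hA.le hk0]; simp only [k]; field_simp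
  have h₃ : 0 ≤ 1 + k * cos t := by nlinarith [neg_one_le_cos t]
  rw [h₁, mul_div_assoc, mul_rpow hA.le (by positivity), div_rpow h₃ ha.le, h₂]
  have hdiv : 1 + tan (π / (2 * p)) * cos (p * t / 2) * k ^ (p / 2)
      ≤ (1 + k * cos t) ^ (p / 2) / (1 + cos (π / p)) ^ (p / 2) :=
    (le_div_iff₀' (rpow_pos_of_pos ha (p / 2))).2 key
  nlinarith [mul_le_mul_of_nonneg_left hdiv (rpow_nonneg hA.le (p / 2))]
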